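/- arXiv:2208.09893 — 2 statements merged into one kernel-verified Lean document; each statement's English description precedes it below -/
import Mathlib

section
/- Let n ≥ 1 be an integer, a ∈ ℝ, c ≠ 0, σ > 0, x > 0 with c²x^{2σ} < 1 and σ < n(1 − c²x^{2σ}), and let u(y) = a + c·y^{σ+1}/(σ+1). Then the model radial mean curvature H[u](x) is strictly negative if c > 0 and strictly positive if c < 0. In other words, the barrier hypersurfaces S_{a,±} given by the graphs of u_{a,±} = a ± c x^{σ+1}/(σ+1) (with c > 0) satisfy ±H[S_{a,±}] < 0. -/
/-- The model radial mean curvature operator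
`H[u](x) = x^{n+1} · d/dx ( x^{−n} u'(x) / √(1 − u'(x)²) )`, the mean curvature of the
radial graph `t = u(x)` in the metric `x^{−2}(dx² − dt² + Σ (dy^A)²)`. -/
noncomputable def modelH (n : ℕ) (u : ℝ → ℝ) (x : ℝ) : ℝ :=
  x ^ (n + 1) *
    deriv (fun y : ℝ => y ^ (-(n : ℤ)) * deriv u y / Real.sqrt (1 - (deriv u y) ^ 2)) x

/-! With `p = u'`, the operator reads `H[u](x) = (x p' - n p (1 - p²)) / (1 - p²)^{3/2}`.
For the barrier `p = c x^σ`, so `x p' = σ p` and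
`H[u](x) = p (σ - n (1 - p²)) / (1 - p²)^{3/2}`: the hypothesis `σ < n (1 - p²)` makes the
second factor negative, so `H[u](x)` has the sign of `-c`. -/

open Filter Topology

theorem hasDerivAt_zpow_mul_div_sqrt {v : ℝ → ℝ} {v' x : ℝ} (n : ℕ) (hx : x ≠ 0)
    (hv : HasDerivAt v v' x) (hvx : v x ^ 2 < 1) :
    HasDerivAt (fun y => y ^ (-(n : ℤ)) * v y / √(1 - v y ^ 2))
      ((x * v' - n * v x * (1 - v x ^ 2)) / (x ^ (n + 1) * √(1 - v x ^ 2) ^ 3)) x := by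
  have hP : 0 < 1 - v x ^ 2 := by linarith
  have hs : √(1 - v x ^ 2) ≠ 0 := (Real.sqrt_pos.mpr hP).ne'
  have hsq : √(1 - v x ^ 2) ^ 2 = 1 - v x ^ 2 := Real.sq_sqrt hP.le
  have h := ((hasDerivAt_zpow (-(n : ℤ)) x (Or.inl hx)).mul hv).div
    (((hasDerivAt_const x (1 : ℝ)).sub (hv.pow 2)).sqrt hP.ne') hs
  refine h.congr_deriv ?_
  simp only [Pi.mul_apply, Pi.sub_apply, Pi.pow_apply, Int.cast_neg, Int.cast_natCast]
  rw [show -(n : ℤ) - 1 = -((n + 1 : ℕ) : ℤ) by push_cast; ring, zpow_neg, zpow_neg,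
    zpow_natCast, zpow_natCast]
  field_simp
  rw [hsq]
  ring

theorem modelH_eq_of_deriv_eventuallyEq {u v : ℝ → ℝ} {v' x : ℝ} (n : ℕ) (hx : x ≠ 0)
    (hu : deriv u =ᶠ[𝓝 x] v) (hv : HasDerivAt v v' x) (hvx : v x ^ 2 < 1) :
    modelH n u x = (x * v' - n * v x * (1 - v x ^ 2)) / √(1 - v x ^ 2) ^ 3 := by
  have hflux : (fun y => y ^ (-(n : ℤ)) * deriv u y / √(1 - deriv u y ^ 2)) =ᶠ[𝓝 x]
      fun y => y ^ (-(n : ℤ)) * v y / √(1 - v y ^ 2) := by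
    filter_upwards [hu] with y hy
    rw [hy]
  rw [modelH, hflux.deriv_eq, (hasDerivAt_zpow_mul_div_sqrt n hx hv hvx).deriv]
  have hxn : x ^ (n + 1) ≠ 0 := pow_ne_zero _ hx
  field_simp

theorem hasDerivAt_const_add_mul_rpow_div {p : ℝ} (a c : ℝ) (hp : p ≠ 0) {y : ℝ}
    (hy : 0 < y) :
    HasDerivAt (fun y : ℝ => a + c * y ^ p / p) (c * y ^ (p - 1)) y := by
  refine ((((Real.hasDerivAt_rpow_const (Or.inl hy.ne')).const_mul c).div_const p).const_add
    a).congr_deriv ?_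
  field_simp

theorem modelH_const_add_mul_rpow_div {σ : ℝ} (n : ℕ) (a c : ℝ) (hσ : σ + 1 ≠ 0) {x : ℝ}
    (hx : 0 < x) (hcx : c ^ 2 * x ^ (2 * σ) < 1) :
    modelH n (fun y => a + c * y ^ (σ + 1) / (σ + 1)) x
      = c * x ^ σ * (σ - n * (1 - c ^ 2 * x ^ (2 * σ))) / √(1 - c ^ 2 * x ^ (2 * σ)) ^ 3 := by
  have hsq : ∀ y, 0 < y → (c * y ^ σ) ^ 2 = c ^ 2 * y ^ (2 * σ) := fun y hy => by
    rw [mul_pow, ← Real.rpow_mul_natCast hy.le]; push_cast; ring_nf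
  have hu : deriv (fun y => a + c * y ^ (σ + 1) / (σ + 1)) =ᶠ[𝓝 x] fun y => c * y ^ σ := by
    filter_upwards [eventually_gt_nhds hx] with y hy
    simpa using (hasDerivAt_const_add_mul_rpow_div a c hσ hy).deriv
  have hv := (Real.hasDerivAt_rpow_const (p := σ) (Or.inl hx.ne')).const_mul c
  rw [modelH_eq_of_deriv_eventuallyEq n hx.ne' hu hv (hsq x hx ▸ hcx), hsq x hx,
    Real.rpow_sub_one hx.ne']
  field_simp

theorem barrier_sign_general (n : ℕ) (a c σ : ℝ) (hσ : 0 < σ)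
    (x : ℝ) (hx : 0 < x) (hcx : c ^ 2 * x ^ (2 * σ) < 1)
    (hσn : σ < (n : ℝ) * (1 - c ^ 2 * x ^ (2 * σ))) :
    (0 < c → modelH n (fun y => a + c * y ^ (σ + 1) / (σ + 1)) x < 0) ∧
    (c < 0 → 0 < modelH n (fun y => a + c * y ^ (σ + 1) / (σ + 1)) x) := by
  have hxσ : 0 < x ^ σ := Real.rpow_pos_of_pos hx σ
  have hgap : σ - n * (1 - c ^ 2 * x ^ (2 * σ)) < 0 := sub_neg.mpr hσn
  have hden : 0 < √(1 - c ^ 2 * x ^ (2 * σ)) ^ 3 :=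
    pow_pos (Real.sqrt_pos.mpr (sub_pos.mpr hcx)) 3
  rw [modelH_const_add_mul_rpow_div n a c (by positivity) hx hcx]
  constructor
  · intro hc
    exact div_neg_of_neg_of_pos (mul_neg_of_pos_of_neg (by positivity) hgap) hden
  · intro hc
    exact div_pos (mul_pos_of_neg_of_neg (mul_neg_of_neg_of_pos hc hxσ) hgap) hden

/-- Sign of the mean curvature of the barriers
`u_{a,±}(y) = a ± c y^{σ+1}/(σ+1)`: if `c²x^{2σ} < 1` and `σ < n(1 − c²x^{2σ})` then
`H[u](x) < 0` when `c > 0` and `H[u](x) > 0` when `c < 0`, i.e. `±H[S_{a,±}] < 0`. -/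
theorem barrier_sign (n : ℕ) (hn : 1 ≤ n) (a c σ : ℝ) (hc : c ≠ 0) (hσ : 0 < σ)
    (x : ℝ) (hx : 0 < x) (hcx : c ^ 2 * x ^ (2 * σ) < 1)
    (hσn : σ < (n : ℝ) * (1 - c ^ 2 * x ^ (2 * σ))) :
    (0 < c → modelH n (fun y => a + c * y ^ (σ + 1) / (σ + 1)) x < 0) ∧
    (c < 0 → 0 < modelH n (fun y => a + c * y ^ (σ + 1) / (σ + 1)) x) :=
  barrier_sign_general n a c σ hσ x hx hcx hσn
end

section
/- Let n ≥ 1 and ℓ ≥ 1 be integers with ℓ ≠ n, let b ∈ ℝ, and set u(y) = b·y^{ℓ+1}. Then the model radial mean curvature satisfies lim_{x→0⁺} H[u](x)/x^ℓ = −b·(ℓ+1)·(n−ℓ). Consequently, if one requires the graph t = u(x) to have mean curvature matching a prescribed function H₁ = H̊₁·x^ℓ + o(x^ℓ) to leading order at the conformal boundary, the coefficient must be b = −H̊₁ / ((n−ℓ)(ℓ+1)), which is the paper's formula ů^{(ℓ+1)} = −(H̊₁^{(ℓ)} − H̊₀^{(ℓ)}) / ((n−ℓ)(ℓ+1)·α̊)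 specialized to the exact model where H̊₀^{(ℓ)} = 0 and α̊ = 1. -/
open Filter Topology Real

theorem HasDerivAt.div_sqrt_one_sub_sq {p : ℝ → ℝ} {p' x : ℝ} (hp : HasDerivAt p p' x)
    (hx : p x ^ 2 < 1) :
    HasDerivAt (fun y => p y / √(1 - p y ^ 2)) (p' / √(1 - p x ^ 2) ^ 3) x := by
  have hpos : 0 < 1 - p x ^ 2 := by linarith
  have hs : √(1 - p x ^ 2) ≠ 0 := (Real.sqrt_pos.2 hpos).ne'
  refine (hp.fun_div (((hp.fun_pow 2).const_sub 1).sqrt hpos.ne') hs).congr_deriv ?_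
  field_simp
  rw [Real.sq_sqrt hpos.le]
  push_cast
  ring

theorem modelH_eq_of_hasDerivAt {n : ℕ} {u : ℝ → ℝ} {u'' x : ℝ} (hx : x ≠ 0)
    (hu : HasDerivAt (deriv u) u'' x) (hu' : deriv u x ^ 2 < 1) :
    modelH n u x =
      x * u'' / √(1 - deriv u x ^ 2) ^ 3 - n * deriv u x / √(1 - deriv u x ^ 2) := by
  have hw := hu.div_sqrt_one_sub_sq hu'
  have hF := (hasDerivAt_zpow (-(n : ℤ)) x (Or.inl hx)).fun_mul hw
  rw [modelH]
  simp only [mul_div_assoc]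
  rw [hF.deriv]
  have h1 : x ^ (n + 1) * x ^ (-(n : ℤ) - 1) = 1 := by
    rw [← zpow_natCast, ← zpow_add₀ hx]; push_cast; ring_nf; simp
  have h2 : x ^ (n + 1) * x ^ (-(n : ℤ)) = x := by
    rw [← zpow_natCast, ← zpow_add₀ hx]; push_cast; ring_nf; simp
  push_cast
  linear_combination (-(n : ℝ) * (deriv u x / √(1 - deriv u x ^ 2))) * h1 +
    (u'' / √(1 - deriv u x ^ 2) ^ 3) * h2

theorem deriv_const_mul_pow_succ (b : ℝ) (ℓ : ℕ) :
    deriv (fun y : ℝ => b * y ^ (ℓ + 1)) = fun y => b * (ℓ + 1) * y ^ ℓ := by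
  funext y
  rw [((hasDerivAt_pow (ℓ + 1) y).const_mul b).deriv]
  push_cast
  ring

theorem modelH_const_mul_pow_succ_div_pow (n ℓ : ℕ) (b : ℝ) {x : ℝ} (hx : x ≠ 0)
    (hsmall : (b * (ℓ + 1) * x ^ ℓ) ^ 2 < 1) :
    modelH n (fun y => b * y ^ (ℓ + 1)) x / x ^ ℓ =
      b * (ℓ + 1) * ℓ / √(1 - (b * (ℓ + 1) * x ^ ℓ) ^ 2) ^ 3 -
        n * (b * (ℓ + 1)) / √(1 - (b * (ℓ + 1) * x ^ ℓ) ^ 2) := by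
  have hu : HasDerivAt (deriv fun y : ℝ => b * y ^ (ℓ + 1))
      (b * (ℓ + 1) * (ℓ * x ^ (ℓ - 1))) x := by
    rw [deriv_const_mul_pow_succ]
    exact (hasDerivAt_pow ℓ x).const_mul _
  rw [modelH_eq_of_hasDerivAt hx hu (by rwa [deriv_const_mul_pow_succ]),
    deriv_const_mul_pow_succ]
  have hxℓ : x * (ℓ * x ^ (ℓ - 1)) = ℓ * x ^ ℓ := by
    rcases ℓ with _ | ℓ
    · simp
    · push_cast; ring
  generalize b * (ℓ + 1) = c at *
  rw [show x * (c * (ℓ * x ^ (ℓ - 1))) = c * ℓ * x ^ ℓ by linear_combination c * hxℓ]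
  field_simp

theorem tendsto_modelH_const_mul_pow_succ_div_pow (n : ℕ) {ℓ : ℕ} (hℓ : 1 ≤ ℓ) (b : ℝ) :
    Tendsto (fun x : ℝ => modelH n (fun y => b * y ^ (ℓ + 1)) x / x ^ ℓ) (𝓝[>] 0)
      (𝓝 (-b * ((ℓ : ℝ) + 1) * ((n : ℝ) - (ℓ : ℝ)))) := by
  set c := b * (ℓ + 1)
  rw [show -b * ((ℓ : ℝ) + 1) * ((n : ℝ) - (ℓ : ℝ)) = c * ℓ / 1 ^ 3 - n * c / 1 by ring]
  have hv : Tendsto (fun x : ℝ => c * x ^ ℓ) (𝓝 0) (𝓝 0) := by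
    simpa [zero_pow (by omega : ℓ ≠ 0)] using ((continuous_pow ℓ).const_mul c).tendsto (0 : ℝ)
  have hs : Tendsto (fun x : ℝ => √(1 - (c * x ^ ℓ) ^ 2)) (𝓝 0) (𝓝 1) := by
    simpa using ((hv.pow 2).const_sub 1).sqrt
  have hlim : Tendsto (fun x : ℝ => c * ℓ / √(1 - (c * x ^ ℓ) ^ 2) ^ 3 -
      n * c / √(1 - (c * x ^ ℓ) ^ 2)) (𝓝 0) (𝓝 (c * ℓ / 1 ^ 3 - n * c / 1)) :=
    (tendsto_const_nhds.div (hs.pow 3) (by norm_num)).sub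
      (tendsto_const_nhds.div hs one_ne_zero)
  have hsmall : ∀ᶠ x in 𝓝 (0 : ℝ), (c * x ^ ℓ) ^ 2 < 1 :=
    (hv.pow 2).eventually (gt_mem_nhds (by norm_num))
  refine (hlim.mono_left nhdsWithin_le_nhds).congr' ?_
  filter_upwards [nhdsWithin_le_nhds hsmall, self_mem_nhdsWithin] with x hx hxpos
  exact (modelH_const_mul_pow_succ_div_pow n ℓ b (ne_of_gt hxpos) hx).symm

theorem prescribed_curvature_coefficient_general (n ℓ : ℕ) (hℓ : 1 ≤ ℓ)
    (hℓn : ℓ ≠ n) (b : ℝ) :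
    Filter.Tendsto (fun x : ℝ => modelH n (fun y => b * y ^ (ℓ + 1)) x / x ^ ℓ)
      (nhdsWithin 0 (Set.Ioi 0))
      (nhds (-b * ((ℓ : ℝ) + 1) * ((n : ℝ) - (ℓ : ℝ)))) ∧
    ∀ H₁ : ℝ,
      Filter.Tendsto (fun x : ℝ => modelH n (fun y => b * y ^ (ℓ + 1)) x / x ^ ℓ)
        (nhdsWithin 0 (Set.Ioi 0)) (nhds H₁) →
      b = -H₁ / (((n : ℝ) - (ℓ : ℝ)) * ((ℓ : ℝ) + 1)) := by
  have hlim := tendsto_modelH_const_mul_pow_succ_div_pow n hℓ b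
  refine ⟨hlim, fun H₁ hH₁ => ?_⟩
  have hnℓ : (n : ℝ) - ℓ ≠ 0 := sub_ne_zero.2 (by exact_mod_cast hℓn.symm)
  rw [← tendsto_nhds_unique hlim hH₁]
  field_simp

/-- Leading coefficient for prescribed mean curvature of order
`x^ℓ` (`1 ≤ ℓ ≠ n`): for `u(y) = b y^{ℓ+1}`,
`lim_{x→0⁺} H[u](x)/x^ℓ = −b(ℓ+1)(n−ℓ)`; hence matching a prescribed
`H₁ = H̊₁ x^ℓ + o(x^ℓ)` to leading order forces `b = −H̊₁/((n−ℓ)(ℓ+1))`. -/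
theorem prescribed_curvature_coefficient (n ℓ : ℕ) (hn : 1 ≤ n) (hℓ : 1 ≤ ℓ)
    (hℓn : ℓ ≠ n) (b : ℝ) :
    Filter.Tendsto (fun x : ℝ => modelH n (fun y => b * y ^ (ℓ + 1)) x / x ^ ℓ)
      (nhdsWithin 0 (Set.Ioi 0))
      (nhds (-b * ((ℓ : ℝ) + 1) * ((n : ℝ) - (ℓ : ℝ)))) ∧
    ∀ H₁ : ℝ,
      Filter.Tendsto (fun x : ℝ => modelH n (fun y => b * y ^ (ℓ + 1)) x / x ^ ℓ)
        (nhdsWithin 0 (Set.Ioi 0)) (nhds H₁) →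
      b = -H₁ / (((n : ℝ) - (ℓ : ℝ)) * ((ℓ : ℝ) + 1)) :=
  prescribed_curvature_coefficient_general n ℓ hℓ hℓn b
end
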